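/- arXiv:2008.03450 — 2 statements merged into one kernel-verified Lean document; each statement's English description precedes it below -/
import Mathlib

section
/- Let σ_θ(S) denote the expected number of activated nodes under the Independent Cascade model on a directed graph G with n nodes and m edges, with edge parameters θ ∈ [0,1]^m, starting from seed set S. If θ_1, θ_2 satisfy ‖θ_1 − θ_2‖_∞ ≤ ε_0, then |σ_{θ_1}(S) − σ_{θ_2}(S)| ≤ m·n·ε_0 for every S ⊆ V. -/
open Finset

noncomputable section
open scoped Classical

variable {V E : Type*}

/-- Weight of a live-edge configuration ω under edge probabilities θ. -/
def liveWeight [Fintype E] (θ : E → ℝ) (ω : E → Bool) : ℝ :=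
  ∏ e, if ω e then θ e else 1 - θ e

/-- `v` is reachable from the seed set `S` via edges live in ω. -/
def reaches (src dst : E → V) (ω : E → Bool) (S : Finset V) (v : V) : Prop :=
  ∃ s ∈ S, Relation.ReflTransGen (fun a b => ∃ e, ω e = true ∧ src e = a ∧ dst e = b) s v

/-- Influence function: expected number of nodes reachable from S. -/
def icSigma [Fintype V] [Fintype E] (src dst : E → V) (θ : E → ℝ) (S : Finset V) : ℝ :=
  ∑ ω : E → Bool, liveWeight θ ω *
    ((Finset.univ.filter (fun v => reaches src dst ω S v)).card : ℝ)

/-- Probability that node v is reachable from seed set S. -/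
def reachProb [Fintype V] [Fintype E] (src dst : E → V) (θ : E → ℝ) (S : Finset V) (v : V) : ℝ :=
  ∑ ω : E → Bool, liveWeight θ ω * (if reaches src dst ω S v then 1 else 0)

/-!
Changing the probability of a single edge `e₀` from `θ e₀` to `θ' e₀` changes the live-edge
weights by signed amounts `±(θ e₀ - θ' e₀) · w(ω)`, where `w(ω)` is the weight of `ω` on the other
edges; these sum to zero and have total mass `2 |θ e₀ - θ' e₀|`. Since the number of reached
nodes lies in `[0, n]`, centring it at `n / 2` bounds the change of `σ` by `|θ e₀ - θ' e₀| · n`.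
Changing the edges one at a time gives `|σ_θ(S) - σ_θ'(S)| ≤ n · ∑ₑ |θ e - θ' e| ≤ m n ε₀`.
-/

theorem abs_sum_mul_le_of_sum_eq_zero {ι : Type*} (s : Finset ι) {a F : ι → ℝ} {c : ℝ}
    (ha : ∑ i ∈ s, a i = 0) (hF : ∀ i ∈ s, F i ∈ Set.Icc 0 c) :
    |∑ i ∈ s, a i * F i| ≤ (∑ i ∈ s, |a i|) * (c / 2) := by
  have hcentre : ∑ i ∈ s, a i * F i = ∑ i ∈ s, a i * (F i - c / 2) := by
    simp only [mul_sub, sum_sub_distrib, ← sum_mul, ha, zero_mul, sub_zero]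
  rw [hcentre, sum_mul]
  refine (abs_sum_le_sum_abs _ _).trans (sum_le_sum fun i hi => ?_)
  rw [abs_mul]
  have ⟨h0, hc⟩ := hF i hi
  exact mul_le_mul_of_nonneg_left (abs_le.2 ⟨by linarith, by linarith⟩) (abs_nonneg _)

section LiveWeight

variable [Fintype E]

theorem sum_pi_bool_prod {R : Type*} [CommSemiring R] (g : E → Bool → R) :
    ∑ ω : E → Bool, ∏ e, g e (ω e) = ∏ e, (g e true + g e false) := by
  simp only [← Fintype.sum_bool, Fintype.prod_sum]

theorem sum_liveWeight (θ : E → ℝ) : ∑ ω : E → Bool, liveWeight θ ω = 1 := by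
  simp [liveWeight, sum_pi_bool_prod (fun e b => if b then θ e else 1 - θ e)]

theorem abs_liveWeight_sub_of_eqOn {θ θ' : E → ℝ} (hθ : ∀ e, θ e ∈ Set.Icc (0 : ℝ) 1) {e₀ : E}
    (h : ∀ e ≠ e₀, θ e = θ' e) (ω : E → Bool) :
    |liveWeight θ ω - liveWeight θ' ω| =
      ∏ e, if e = e₀ then |θ e₀ - θ' e₀| else if ω e then θ e else 1 - θ e := by
  have hsplit (τ : E → ℝ) : liveWeight τ ω = (if ω e₀ then τ e₀ else 1 - τ e₀) *
      ∏ e ∈ univ.erase e₀, if ω e then τ e else 1 - τ e :=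
    (mul_prod_erase _ _ (mem_univ e₀)).symm
  have hrest : ∏ e ∈ univ.erase e₀, (if ω e then θ' e else 1 - θ' e) =
      ∏ e ∈ univ.erase e₀, if ω e then θ e else 1 - θ e :=
    prod_congr rfl fun e he => by rw [h e (ne_of_mem_erase he)]
  have hrest_nonneg : 0 ≤ ∏ e ∈ univ.erase e₀, if ω e then θ e else 1 - θ e :=
    prod_nonneg fun e _ => by
      obtain ⟨h0, h1⟩ := hθ e
      split_ifs <;> linarith
  rw [hsplit θ, hsplit θ', hrest, ← sub_mul, abs_mul, abs_of_nonneg hrest_nonneg,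
    ← mul_prod_erase univ _ (mem_univ e₀), if_pos rfl]
  congr 1
  · cases ω e₀ <;> simp [abs_sub_comm]
  · exact prod_congr rfl fun e he => (if_neg (ne_of_mem_erase he)).symm

theorem sum_abs_liveWeight_sub_of_eqOn {θ θ' : E → ℝ} (hθ : ∀ e, θ e ∈ Set.Icc (0 : ℝ) 1)
    {e₀ : E} (h : ∀ e ≠ e₀, θ e = θ' e) :
    ∑ ω : E → Bool, |liveWeight θ ω - liveWeight θ' ω| = 2 * |θ e₀ - θ' e₀| := by
  simp_rw [abs_liveWeight_sub_of_eqOn hθ h]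
  rw [sum_pi_bool_prod (fun e b => if e = e₀ then |θ e₀ - θ' e₀| else if b then θ e else 1 - θ e)]
  have hfactor (e : E) : ((if e = e₀ then |θ e₀ - θ' e₀| else θ e) +
      if e = e₀ then |θ e₀ - θ' e₀| else 1 - θ e) = if e = e₀ then 2 * |θ e₀ - θ' e₀| else 1 := by
    split_ifs <;> ring
  simp only [Bool.false_eq_true, if_true, if_false, hfactor, prod_ite_eq', mem_univ]

theorem abs_sum_liveWeight_mul_sub_le_of_eqOn {θ θ' : E → ℝ}
    (hθ : ∀ e, θ e ∈ Set.Icc (0 : ℝ) 1) {e₀ : E} (h : ∀ e ≠ e₀, θ e = θ' e)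
    {F : (E → Bool) → ℝ} {c : ℝ} (hF : ∀ ω, F ω ∈ Set.Icc 0 c) :
    |∑ ω, liveWeight θ ω * F ω - ∑ ω, liveWeight θ' ω * F ω| ≤ |θ e₀ - θ' e₀| * c := by
  rw [← sum_sub_distrib]
  simp_rw [← sub_mul]
  refine (abs_sum_mul_le_of_sum_eq_zero _ ?_ fun ω _ => hF ω).trans_eq ?_
  · rw [sum_sub_distrib, sum_liveWeight, sum_liveWeight, sub_self]
  · rw [sum_abs_liveWeight_sub_of_eqOn hθ h]
    ring

theorem abs_sum_liveWeight_mul_sub_le_of_eqOn_compl {θ θ' : E → ℝ}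
    (hθ : ∀ e, θ e ∈ Set.Icc (0 : ℝ) 1) (hθ' : ∀ e, θ' e ∈ Set.Icc (0 : ℝ) 1) {A : Finset E}
    (hA : ∀ e ∉ A, θ e = θ' e) {F : (E → Bool) → ℝ} {c : ℝ} (hF : ∀ ω, F ω ∈ Set.Icc 0 c) :
    |∑ ω, liveWeight θ ω * F ω - ∑ ω, liveWeight θ' ω * F ω| ≤ c * ∑ e ∈ A, |θ e - θ' e| := by
  induction A using Finset.induction_on generalizing θ with
  | empty =>
    obtain rfl : θ = θ' := funext fun e => hA e (notMem_empty e)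
    simp
  | insert a A ha ih =>
    set θ'' := Function.update θ a (θ' a)
    have hθ''_self : θ'' a = θ' a := Function.update_self a _ θ
    have hθ''_of_ne (e : E) (he : e ≠ a) : θ'' e = θ e := Function.update_of_ne he _ θ
    have hθ'' (e : E) : θ'' e ∈ Set.Icc (0 : ℝ) 1 := by
      by_cases hea : e = a
      · rw [hea, hθ''_self]; exact hθ' a
      · rw [hθ''_of_ne e hea]; exact hθ e
    have hfirst := abs_sum_liveWeight_mul_sub_le_of_eqOn hθ (fun e he => (hθ''_of_ne e he).symm) hF
    have hrest := ih hθ'' fun e he => by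
      by_cases hea : e = a
      · rw [hea, hθ''_self]
      · rw [hθ''_of_ne e hea, hA e (by simp [hea, he])]
    have hsum : ∑ e ∈ A, |θ'' e - θ' e| = ∑ e ∈ A, |θ e - θ' e| :=
      sum_congr rfl fun e he => by rw [hθ''_of_ne e (ne_of_mem_of_not_mem he ha)]
    rw [sum_insert ha, mul_add, ← hsum]
    refine (abs_sub_le _ (∑ ω, liveWeight θ'' ω * F ω) _).trans (add_le_add ?_ hrest)
    rwa [hθ''_self, mul_comm] at hfirst

end LiveWeight

/-- If ‖θ₁ − θ₂‖∞ ≤ ε₀ then |σ_{θ₁}(S) − σ_{θ₂}(S)| ≤ m·n·ε₀ for every seed set S. -/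
theorem ic_influence_lipschitz [Fintype V] [Fintype E] (src dst : E → V)
    (θ₁ θ₂ : E → ℝ) (h₁ : ∀ e, θ₁ e ∈ Set.Icc (0:ℝ) 1) (h₂ : ∀ e, θ₂ e ∈ Set.Icc (0:ℝ) 1)
    (ε₀ : ℝ) (hθ : ∀ e, |θ₁ e - θ₂ e| ≤ ε₀) (S : Finset V) :
    |icSigma src dst θ₁ S - icSigma src dst θ₂ S| ≤
      (Fintype.card E : ℝ) * (Fintype.card V : ℝ) * ε₀ := by
  have hreached (ω : E → Bool) : ((univ.filter fun v => reaches src dst ω S v).card : ℝ) ∈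
      Set.Icc 0 (Fintype.card V : ℝ) :=
    ⟨Nat.cast_nonneg _, by exact_mod_cast card_filter_le _ _⟩
  calc |icSigma src dst θ₁ S - icSigma src dst θ₂ S|
      ≤ Fintype.card V * ∑ e, |θ₁ e - θ₂ e| :=
        abs_sum_liveWeight_mul_sub_le_of_eqOn_compl h₁ h₂ (fun e he => absurd (mem_univ e) he)
          hreached
    _ ≤ Fintype.card V * (Fintype.card E * ε₀) := by
        gcongr
        simpa using sum_le_card_nsmul univ _ ε₀ fun e _ => hθ e
    _ = Fintype.card E * Fintype.card V * ε₀ := by ring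
end
end

section
/- For the Independent Cascade model defined by the live-edge representation with edge probabilities θ, the influence function σ_θ : 2^V → ℝ is monotone (S ⊆ S' implies σ_θ(S) ≤ σ_θ(S')) and submodular (σ_θ(S ∪ {v}) − σ_θ(S) ≥ σ_θ(S' ∪ {v}) − σ_θ(S') whenever S ⊆ S' and v ∉ S'). -/
open Finset

noncomputable section
open scoped Classical

variable {V E : Type*}

/-! For a fixed live-edge configuration `ω`, the set of nodes reached from `S` is the union over
`s ∈ S` of the nodes reached from `s`, so its size is a coverage function of `S`: adding a seed
gains the nodes it reaches that were not reached before, and there are fewer of these the larger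
`S` is. The influence `σ_θ` is an average of these coverage functions with the nonnegative weights
`liveWeight θ ω`, and averaging preserves monotonicity and diminishing returns. -/

lemma Finset.card_union_add_card_le_of_subset {α : Type*} [DecidableEq α] {A B : Finset α}
    (hAB : A ⊆ B) (C : Finset α) : #(B ∪ C) + #A ≤ #(A ∪ C) + #B := by
  have hB := card_union_add_card_inter B C
  have hA := card_union_add_card_inter A C
  have hinter : #(A ∩ C) ≤ #(B ∩ C) := card_le_card (inter_subset_inter_right hAB)
  omega

lemma liveWeight_nonneg [Fintype E] {θ : E → ℝ} (hθ : ∀ e, θ e ∈ Set.Icc (0:ℝ) 1)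
    (ω : E → Bool) : 0 ≤ liveWeight θ ω :=
  prod_nonneg fun e _ => by
    obtain ⟨h0, h1⟩ := hθ e
    split <;> linarith

lemma sum_liveWeight_mul_le_sum_liveWeight_mul [Fintype E] {θ : E → ℝ}
    (hθ : ∀ e, θ e ∈ Set.Icc (0:ℝ) 1) {f g : (E → Bool) → ℝ} (hfg : ∀ ω, f ω ≤ g ω) :
    ∑ ω, liveWeight θ ω * f ω ≤ ∑ ω, liveWeight θ ω * g ω :=
  sum_le_sum fun ω _ => mul_le_mul_of_nonneg_left (hfg ω) (liveWeight_nonneg hθ ω)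

section reachSet

variable [Fintype V] (src dst : E → V) (ω : E → Bool)

def reachSet (S : Finset V) : Finset V :=
  univ.filter (reaches src dst ω S)

lemma reachSet_mono : Monotone (reachSet src dst ω) :=
  fun _ _ hST => monotone_filter_right _ fun _ _ ⟨s, hs, hsv⟩ => ⟨s, hST hs, hsv⟩

lemma reachSet_insert [DecidableEq V] (v : V) (S : Finset V) :
    reachSet src dst ω (insert v S) = reachSet src dst ω S ∪ reachSet src dst ω {v} := by
  ext w
  simp only [reachSet, reaches, mem_union, mem_filter, mem_univ, true_and,
    exists_mem_insert, mem_singleton, exists_eq_left, or_comm]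

end reachSet

section icSigma

variable [Fintype V] [Fintype E] {src dst : E → V} {θ : E → ℝ}

lemma icSigma_eq_sum_card_reachSet (S : Finset V) :
    icSigma src dst θ S = ∑ ω, liveWeight θ ω * (#(reachSet src dst ω S) : ℝ) :=
  rfl

theorem icSigma_mono (hθ : ∀ e, θ e ∈ Set.Icc (0:ℝ) 1) : Monotone (icSigma src dst θ) :=
  fun S T hST => sum_liveWeight_mul_le_sum_liveWeight_mul hθ fun ω => by
    exact_mod_cast card_le_card (reachSet_mono src dst ω hST)

theorem icSigma_insert_sub_le [DecidableEq V] (hθ : ∀ e, θ e ∈ Set.Icc (0:ℝ) 1) (v : V)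
    {S T : Finset V} (hST : S ⊆ T) :
    icSigma src dst θ (insert v T) - icSigma src dst θ T ≤
      icSigma src dst θ (insert v S) - icSigma src dst θ S := by
  rw [sub_le_sub_iff]
  simp only [icSigma_eq_sum_card_reachSet, ← sum_add_distrib, ← mul_add]
  refine sum_liveWeight_mul_le_sum_liveWeight_mul hθ fun ω => ?_
  rw [reachSet_insert, reachSet_insert]
  exact_mod_cast card_union_add_card_le_of_subset (reachSet_mono src dst ω hST) _

end icSigma

/-- The IC influence function is monotone and submodular in the seed set. -/
theorem ic_monotone_submodular [Fintype V] [Fintype E] [DecidableEq V] (src dst : E → V)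
    (θ : E → ℝ) (hθ : ∀ e, θ e ∈ Set.Icc (0:ℝ) 1) :
    (∀ S S' : Finset V, S ⊆ S' → icSigma src dst θ S ≤ icSigma src dst θ S') ∧
    (∀ S S' : Finset V, ∀ v : V, S ⊆ S' → v ∉ S' →
      icSigma src dst θ (insert v S') - icSigma src dst θ S' ≤
        icSigma src dst θ (insert v S) - icSigma src dst θ S) :=
  ⟨fun _ _ hSS' => icSigma_mono hθ hSS', fun _ _ v hSS' _ => icSigma_insert_sub_le hθ v hSS'⟩
end
end
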